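/- Structure preserving bisimilarity is a congruence for the CCSP choice operator on nets: if N₁ˡ ≈sp N₂ˡ and N₁ʳ ≈sp N₂ʳ, and the initial markings of N₁ˡ, N₁ʳ, N₂ˡ, N₂ʳ are all nonempty plain sets, then N₁ˡ +_𝒩 N₁ʳ ≈sp N₂ˡ +_𝒩 N₂ʳ. -/

import Mathlib

open scoped Classical

/-- A typed Petri net over the action alphabet `Act`.  The flow relation (with arc
weights) is presented through the pre- and post-multisets of each transition. -/
structure PetriNet (Act : Type) : Type 1 where
  Plc : Type
  Tr : Type
  pre : Tr → Multiset Plc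
  post : Tr → Multiset Plc
  M0 : Multiset Plc
  typ : Set Act
  lbl : Tr → Act
  lbl_mem : ∀ t, lbl t ∈ typ

namespace PetriNet

variable {Act : Type}

/-- `M [t⟩ M'`: transition `t` is enabled at the marking `M` and firing it yields `M'`. -/
def fires (N : PetriNet Act) (M : Multiset N.Plc) (t : N.Tr) (M' : Multiset N.Plc) : Prop :=
  N.pre t ≤ M ∧ M' = M - N.pre t + N.post t

/-- The markings reachable from the initial marking (i.e. occurring in some path). -/
inductive Reachable (N : PetriNet Act) : Multiset N.Plc → Prop
  | init : Reachable N N.M0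
  | step {M : Multiset N.Plc} {t : N.Tr} {M' : Multiset N.Plc} :
      Reachable N M → N.fires M t M' → Reachable N M'

/-- Bounded parallelism: no reachable marking `M` admits an infinite multiset `U` of
transitions with `∑_{t ∈ U} •t ≤ M`. -/
def BoundedParallelism (N : PetriNet Act) : Prop :=
  ¬ ∃ (M : Multiset N.Plc) (U : N.Tr → ℕ), N.Reachable M ∧
      (Function.support U).Infinite ∧
      ∀ F : Finset N.Tr, (∑ t ∈ F, U t • N.pre t) ≤ M

/-- A net is safe if every reachable marking is a plain set. -/
def Safe (N : PetriNet Act) : Prop := ∀ M, N.Reachable M → M.Nodup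

end PetriNet

/-- A linking between two nets: a multiset of links, i.e. of pairs of places. -/
abbrev Linking {Act : Type} (N₁ N₂ : PetriNet Act) : Type := Multiset (N₁.Plc × N₂.Plc)

/-- First projection of a linking: the induced marking of the first net. -/
def Linking.proj1 {Act : Type} {N₁ N₂ : PetriNet Act} (l : Linking N₁ N₂) :
    Multiset N₁.Plc := l.map Prod.fst

/-- Second projection of a linking: the induced marking of the second net. -/
def Linking.proj2 {Act : Type} {N₁ N₂ : PetriNet Act} (l : Linking N₁ N₂) :
    Multiset N₂.Plc := l.map Prod.snd

/-- `B` is a structure preserving bisimulation between `N₁` and `N₂`. -/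
def IsSPBisim {Act : Type} (N₁ N₂ : PetriNet Act) (B : Set (Linking N₁ N₂)) : Prop :=
  (∀ c l : Linking N₁ N₂, l ∈ B → c ≤ l → ∀ t₁ : N₁.Tr, c.proj1 = N₁.pre t₁ →
      ∃ t₂ : N₂.Tr, N₂.lbl t₂ = N₁.lbl t₁ ∧ c.proj2 = N₂.pre t₂ ∧
        ∃ cbar : Linking N₁ N₂, cbar.proj1 = N₁.post t₁ ∧ cbar.proj2 = N₂.post t₂ ∧
          l - c + cbar ∈ B) ∧
  (∀ c l : Linking N₁ N₂, l ∈ B → c ≤ l → ∀ t₂ : N₂.Tr, c.proj2 = N₂.pre t₂ →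
      ∃ t₁ : N₁.Tr, N₁.lbl t₁ = N₂.lbl t₂ ∧ c.proj1 = N₁.pre t₁ ∧
        ∃ cbar : Linking N₁ N₂, cbar.proj1 = N₁.post t₁ ∧ cbar.proj2 = N₂.post t₂ ∧
          l - c + cbar ∈ B)

/-- Structure preserving bisimilarity `N₁ ≈sp N₂`. -/
def SPBisimilar {Act : Type} (N₁ N₂ : PetriNet Act) : Prop :=
  N₁.typ = N₂.typ ∧ ∃ B : Set (Linking N₁ N₂), IsSPBisim N₁ N₂ B ∧
    ∃ l ∈ B, l.proj1 = N₁.M0 ∧ l.proj2 = N₂.M0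

/-- Transitions of `N₁ +_𝒩 N₂`: a transition `tᵢ^K` for each transition `tᵢ` of a
component and each nonempty `K ≤ •tᵢ ∩ Mᵢ`. -/
def choiceTrProp {Act : Type} (N₁ N₂ : PetriNet Act) :
    (N₁.Tr × Multiset N₁.Plc) ⊕ (N₂.Tr × Multiset N₂.Plc) → Prop
  | Sum.inl p => p.2 ≠ 0 ∧ p.2 ≤ N₁.pre p.1 ∧ p.2 ≤ N₁.M0
  | Sum.inr p => p.2 ≠ 0 ∧ p.2 ≤ N₂.pre p.1 ∧ p.2 ≤ N₂.M0

/-- Presets in the choice composition: `•tᵢ^K = •tᵢ − K + (K × M_j)` (with the fresh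
places being pairs of initially marked places). -/
noncomputable def choicePre {Act : Type} (N₁ N₂ : PetriNet Act) :
    (N₁.Tr × Multiset N₁.Plc) ⊕ (N₂.Tr × Multiset N₂.Plc) →
      Multiset (N₁.Plc ⊕ N₂.Plc ⊕ N₁.Plc × N₂.Plc)
  | Sum.inl p => (N₁.pre p.1 - p.2).map Sum.inl +
      (p.2 ×ˢ N₂.M0).map (fun q => Sum.inr (Sum.inr q))
  | Sum.inr p => (N₂.pre p.1 - p.2).map (fun s => Sum.inr (Sum.inl s)) +
      (N₁.M0 ×ˢ p.2).map (fun q => Sum.inr (Sum.inr q))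

/-- Postsets in the choice composition: `(tᵢ^K)• = tᵢ•`. -/
def choicePost {Act : Type} (N₁ N₂ : PetriNet Act) :
    (N₁.Tr × Multiset N₁.Plc) ⊕ (N₂.Tr × Multiset N₂.Plc) →
      Multiset (N₁.Plc ⊕ N₂.Plc ⊕ N₁.Plc × N₂.Plc)
  | Sum.inl p => (N₁.post p.1).map Sum.inl
  | Sum.inr p => (N₂.post p.1).map (fun s => Sum.inr (Sum.inl s))

/-- Labels in the choice composition. -/
def choiceLbl {Act : Type} (N₁ N₂ : PetriNet Act) :
    (N₁.Tr × Multiset N₁.Plc) ⊕ (N₂.Tr × Multiset N₂.Plc) → Act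
  | Sum.inl p => N₁.lbl p.1
  | Sum.inr p => N₂.lbl p.1

/-- The CCSP choice `N₁ +_𝒩 N₂` of two nets (whose initial markings should be nonempty
plain sets); the fresh places `M₁ × M₂` form the new initial marking. -/
noncomputable def choiceNet {Act : Type} (N₁ N₂ : PetriNet Act) : PetriNet Act where
  Plc := N₁.Plc ⊕ N₂.Plc ⊕ N₁.Plc × N₂.Plc
  Tr := {x : (N₁.Tr × Multiset N₁.Plc) ⊕ (N₂.Tr × Multiset N₂.Plc) // choiceTrProp N₁ N₂ x}
  pre := fun t => choicePre N₁ N₂ t.val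
  post := fun t => choicePost N₁ N₂ t.val
  M0 := (N₁.M0 ×ˢ N₂.M0).map (fun q => Sum.inr (Sum.inr q))
  typ := N₁.typ ∪ N₂.typ
  lbl := fun t => choiceLbl N₁ N₂ t.val
  lbl_mem := by
    rintro ⟨x, hx⟩
    rcases x with p | p
    · exact Set.mem_union_left _ (N₁.lbl_mem p.1)
    · exact Set.mem_union_right _ (N₂.lbl_mem p.1)

/-!
The relation between the two choices has three kinds of linkings: the initial one, which links
the fresh places `M₀ˡ × M₀ʳ` along the product `ll × lr` of the initial linkings of the
components; and, once the left component has moved, linkings made of a linking `a` of left places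
together with `b × lr` on fresh places, where `a + b` lies in the left bisimulation and `b < ll`
(symmetrically on the right). A left transition `t^K` consumes the fresh places `K × M₀ʳ`. As
`M₀ʳ` is a plain set, the links it consumes from `b × lr` form a product `cb × lr`, and together
with its links `ca` from `a` they project onto `•t`; the left bisimulation matches `t` by some `t₂`,
and `t₂^{π₂ cb}` matches `t^K`. A right transition would consume `M₀ˡ × K`, which needs all of
`M₀ˡ` in `π₁ b`, impossible once `b < ll`. The converse transfer property is the same argument
applied to the swapped linkings.
-/

namespace Multiset

variable {α β γ δ : Type*}

theorem le_map_iff {f : α → β} {c : Multiset β} {s : Multiset α} :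
    c ≤ s.map f ↔ ∃ s' ≤ s, s'.map f = c := by
  refine ⟨fun h => ?_, by rintro ⟨s', hs', rfl⟩; exact map_le_map hs'⟩
  induction c using Quotient.inductionOn
  induction s using Quotient.inductionOn
  obtain ⟨l, hl, hsub⟩ := coe_le.1 h
  obtain ⟨l', hl', rfl⟩ := List.sublist_map_iff.1 hsub
  exact ⟨l', coe_le.2 hl'.subperm, coe_eq_coe.2 hl⟩

theorem exists_le_add_of_le_add {c s t : Multiset α} (h : c ≤ s + t) :
    ∃ c₁ ≤ s, ∃ c₂ ≤ t, c = c₁ + c₂ := by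
  refine ⟨c ∩ s, inter_le_right, c - c ∩ s, le_iff_count.2 fun a => ?_,
    (add_tsub_cancel_of_le inter_le_left).symm⟩
  have hcount := count_le_of_le a h
  simp only [count_sub, count_inter, count_add] at hcount ⊢
  omega

theorem map_add_map_inj {ι : α → γ} {κ : β → γ} (h : Function.Injective (Sum.elim ι κ))
    {x x' : Multiset α} {y y' : Multiset β} :
    x.map ι + y.map κ = x'.map ι + y'.map κ ↔ x = x' ∧ y = y' := by
  refine ⟨fun hxy => ?_, by rintro ⟨rfl, rfl⟩; rfl⟩
  have hsum : ∀ (x : Multiset α) (y : Multiset β),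
      x.map ι + y.map κ = (x.map Sum.inl + y.map Sum.inr).map (Sum.elim ι κ) := by
    intro x y
    simp only [map_add, map_map, Function.comp_def, Sum.elim_inl, Sum.elim_inr]
  rw [hsum, hsum] at hxy
  replace hxy := map_injective h hxy
  constructor
  · ext a
    simpa [count_map_eq_count' _ _ Sum.inl_injective] using congrArg (count (Sum.inl a)) hxy
  · ext b
    simpa [count_map_eq_count' _ _ Sum.inr_injective] using congrArg (count (Sum.inr b)) hxy

theorem map_product_map (f : α → γ) (g : β → δ) (s : Multiset α) (t : Multiset β) :
    (s ×ˢ t).map (Prod.map f g) = s.map f ×ˢ t.map g := by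
  induction s using Multiset.induction <;> simp_all [cons_product]

theorem map_comp_swap_product (f : α × β → γ) (s : Multiset β) (t : Multiset α) :
    (s ×ˢ t).map (f ∘ Prod.swap) = (t ×ˢ s).map f := by
  rw [← map_map, map_swap_product]

theorem count_product (a : α) (b : β) (s : Multiset α) (t : Multiset β) :
    count (a, b) (s ×ˢ t) = count a s * count b t := by
  induction s using Multiset.induction with
  | empty => simp
  | cons x s ih =>
    rcases eq_or_ne a x with rfl | hax
    · simp [cons_product, ih, count_map_eq_count' _ _ (Prod.mk_right_injective a), add_mul,
        add_comm]
    · simp [cons_product, ih, hax, hax.symm]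

theorem le_of_product_le_product {s s' : Multiset α} {t : Multiset β} (ht : t ≠ 0)
    (h : s ×ˢ t ≤ s' ×ˢ t) : s ≤ s' := by
  obtain ⟨y, hy⟩ := exists_mem_of_ne_zero ht
  refine le_iff_count.2 fun x => Nat.le_of_mul_le_mul_right ?_ (count_pos.2 hy)
  simpa only [count_product] using count_le_of_le (x, y) h

theorem eq_of_map_eq_of_le {f : α → β} {s c₁ c₂ : Multiset α} (hs : (s.map f).Nodup)
    (h₁ : c₁ ≤ s) (h₂ : c₂ ≤ s) (h : c₁.map f = c₂.map f) : c₁ = c₂ := by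
  have hnodup : ∀ c ≤ s, c.Nodup := fun c hc => (nodup_of_le (map_le_map hc) hs).of_map f
  have hmem : ∀ {c c'}, c ≤ s → c' ≤ s → c.map f = c'.map f → ∀ x ∈ c, x ∈ c' := by
    intro c c' hc hc' hcc' x hx
    obtain ⟨y, hy, hyx⟩ := mem_map.1 (hcc' ▸ mem_map_of_mem f hx)
    rwa [← inj_on_of_nodup_map hs y (mem_of_le hc' hy) x (mem_of_le hc hx) hyx]
  exact (Nodup.ext (hnodup c₁ h₁) (hnodup c₂ h₂)).2 fun x =>
    ⟨hmem h₁ h₂ h x, hmem h₂ h₁ h.symm x⟩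

theorem exists_eq_product_of_le_product {f : α → γ} {g : β → δ} {b : Multiset α}
    {r : Multiset β} {d : Multiset (α × β)} {K : Multiset γ} (hb : (b.map f).Nodup)
    (hr : (r.map g).Nodup) (hr0 : r ≠ 0) (hd : d ≤ b ×ˢ r)
    (hK : d.map (Prod.map f g) = K ×ˢ r.map g) : ∃ b' ≤ b, b'.map f = K ∧ d = b' ×ˢ r := by
  have hKb : K ≤ b.map f := by
    refine le_of_product_le_product (t := r.map g) (by simpa using hr0) ?_
    rw [← hK, ← map_product_map]
    exact map_le_map hd
  obtain ⟨b', hb', rfl⟩ := le_map_iff.1 hKb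
  refine ⟨b', hb', rfl, eq_of_map_eq_of_le (f := Prod.map f g) ?_ hd ?_ ?_⟩
  · rw [map_product_map]
    exact hb.product hr
  · obtain ⟨u, rfl⟩ := le_iff_exists_add.1 hb'
    rw [add_product]
    exact le_add_right _ _
  · rw [hK, map_product_map]

theorem eq_of_le_of_map_subset {f : α → β} {s t : Multiset α} (h : s ≤ t)
    (ht : (t.map f).Nodup) (hsub : t.map f ⊆ s.map f) : s = t :=
  eq_of_le_of_card_le h (by simpa using card_le_card ((le_iff_subset ht).2 hsub))

end Multiset

open Multiset

namespace Linking

variable {Act : Type} {N₁ N₂ : PetriNet Act}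

def swap (l : Linking N₁ N₂) : Linking N₂ N₁ := l.map Prod.swap

def IsInitial (l : Linking N₁ N₂) : Prop := l.proj1 = N₁.M0 ∧ l.proj2 = N₂.M0

@[simp] theorem proj1_swap (l : Linking N₁ N₂) : l.swap.proj1 = l.proj2 := by
  simp [swap, proj1, proj2, map_map]

@[simp] theorem proj2_swap (l : Linking N₁ N₂) : l.swap.proj2 = l.proj1 := by
  simp [swap, proj1, proj2, map_map]

@[simp] theorem swap_swap (l : Linking N₁ N₂) : l.swap.swap = l := by
  simp [swap, map_map]

@[simp] theorem swap_zero : (0 : Linking N₁ N₂).swap = 0 := map_zero _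

@[simp] theorem swap_add (l l' : Linking N₁ N₂) : (l + l').swap = l.swap + l'.swap :=
  map_add _ _ _

@[simp] theorem swap_sub (l l' : Linking N₁ N₂) : (l - l').swap = l.swap - l'.swap := by
  ext p
  rw [← Prod.swap_swap p]
  simp only [swap, count_map_eq_count' _ _ Prod.swap_injective, count_sub]

@[simp] theorem swap_le_swap {l l' : Linking N₁ N₂} : l.swap ≤ l'.swap ↔ l ≤ l' :=
  map_le_map_iff Prod.swap_injective

@[simp] theorem swap_lt_swap {l l' : Linking N₁ N₂} : l.swap < l'.swap ↔ l < l' := by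
  simp only [lt_iff_le_not_ge, swap_le_swap]

theorem isInitial_swap {l : Linking N₁ N₂} : l.swap.IsInitial ↔ l.IsInitial := by
  simp [IsInitial, and_comm]

end Linking

section Simulation

variable {Act : Type} {N₁ N₂ : PetriNet Act}

def IsSPMatched (B : Set (Linking N₁ N₂)) (c l : Linking N₁ N₂) (t₁ : N₁.Tr) : Prop :=
  ∃ t₂ : N₂.Tr, N₂.lbl t₂ = N₁.lbl t₁ ∧ c.proj2 = N₂.pre t₂ ∧
    ∃ cbar : Linking N₁ N₂, cbar.proj1 = N₁.post t₁ ∧ cbar.proj2 = N₂.post t₂ ∧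
      l - c + cbar ∈ B

variable (N₁ N₂) in
def IsSPSimulation (B : Set (Linking N₁ N₂)) : Prop :=
  ∀ c l : Linking N₁ N₂, l ∈ B → c ≤ l → ∀ t₁ : N₁.Tr, c.proj1 = N₁.pre t₁ → IsSPMatched B c l t₁

theorem isSPBisim_iff {B : Set (Linking N₁ N₂)} :
    IsSPBisim N₁ N₂ B ↔ IsSPSimulation N₁ N₂ B ∧ IsSPSimulation N₂ N₁ (Linking.swap ⁻¹' B) := by
  refine and_congr_right fun _ => ⟨fun h c l hl hc t hpre => ?_, fun h c l hl hc t hpre => ?_⟩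
  · obtain ⟨t', hlbl, hpre', cbar, h₁, h₂, hmem⟩ :=
      h c.swap l.swap hl (Linking.swap_le_swap.2 hc) t (by simpa using hpre)
    exact ⟨t', hlbl, by simpa using hpre', cbar.swap, by simpa using h₂, by simpa using h₁,
      by simpa using hmem⟩
  · obtain ⟨t', hlbl, hpre', cbar, h₁, h₂, hmem⟩ :=
      h c.swap l.swap (by simpa using hl) (Linking.swap_le_swap.2 hc) t (by simpa using hpre)
    exact ⟨t', hlbl, by simpa using hpre', cbar.swap, by simpa using h₂, by simpa using h₁,
      by simpa using hmem⟩

end Simulation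

section Embedding

/-- The preset `•t - K + K × M` of `t^K` in a choice composition, where `ι` embeds the places of
the component of `t` and `κ` the fresh places. -/
noncomputable def embedPre {X R P : Type*} (ι : X → P) (κ : X × R → P) (m K : Multiset X)
    (M : Multiset R) : Multiset P :=
  (m - K).map ι + (K ×ˢ M).map κ

variable {X₁ X₂ R₁ R₂ P₁ P₂ : Type*} (ι₁ : X₁ → P₁) (κ₁ : X₁ × R₁ → P₁) (ι₂ : X₂ → P₂)
  (κ₂ : X₂ × R₂ → P₂)

def pairLink (p : (X₁ × X₂) × (R₁ × R₂)) : P₁ × P₂ := (κ₁ (p.1.1, p.2.1), κ₂ (p.1.2, p.2.2))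

/-- Links `a` between component places, and links between the fresh places obtained by pairing each
link of `b` with each link of the other component's linking `r`. -/
def embedLinks (r : Multiset (R₁ × R₂)) (a b : Multiset (X₁ × X₂)) : Multiset (P₁ × P₂) :=
  a.map (Prod.map ι₁ ι₂) + (b ×ˢ r).map (pairLink κ₁ κ₂)

theorem map_fst_embedLinks (r : Multiset (R₁ × R₂)) (a b : Multiset (X₁ × X₂)) :
    (embedLinks ι₁ κ₁ ι₂ κ₂ r a b).map Prod.fst =
      (a.map Prod.fst).map ι₁ + (b.map Prod.fst ×ˢ r.map Prod.fst).map κ₁ := by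
  simp only [embedLinks, map_add, ← map_product_map, map_map]
  rfl

theorem map_snd_embedLinks (r : Multiset (R₁ × R₂)) (a b : Multiset (X₁ × X₂)) :
    (embedLinks ι₁ κ₁ ι₂ κ₂ r a b).map Prod.snd =
      (a.map Prod.snd).map ι₂ + (b.map Prod.snd ×ˢ r.map Prod.snd).map κ₂ := by
  simp only [embedLinks, map_add, ← map_product_map, map_map]
  rfl

theorem embedLinks_add (r : Multiset (R₁ × R₂)) (a b a' b' : Multiset (X₁ × X₂)) :
    embedLinks ι₁ κ₁ ι₂ κ₂ r (a + a') (b + b') =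
      embedLinks ι₁ κ₁ ι₂ κ₂ r a b + embedLinks ι₁ κ₁ ι₂ κ₂ r a' b' := by
  simp only [embedLinks, add_product, map_add]
  abel

theorem embedLinks_swap (r : Multiset (R₁ × R₂)) (a b : Multiset (X₁ × X₂)) :
    (embedLinks ι₁ κ₁ ι₂ κ₂ r a b).map Prod.swap =
      embedLinks ι₂ κ₂ ι₁ κ₁ (r.map Prod.swap) (a.map Prod.swap) (b.map Prod.swap) := by
  simp only [embedLinks, map_add, ← map_product_map, map_map]
  rfl

variable {ι₁ κ₁} in
theorem exists_eq_embedLinks_of_le (hinj : Function.Injective (Sum.elim ι₁ κ₁))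
    {r : Multiset (R₁ × R₂)} {a b : Multiset (X₁ × X₂)} {c : Multiset (P₁ × P₂)}
    {m K : Multiset X₁}
    (hb : (b.map Prod.fst).Nodup) (hr : (r.map Prod.fst).Nodup) (hr0 : r ≠ 0)
    (hc : c ≤ embedLinks ι₁ κ₁ ι₂ κ₂ r a b)
    (hpre : c.map Prod.fst = m.map ι₁ + (K ×ˢ r.map Prod.fst).map κ₁) :
    ∃ ca ≤ a, ∃ cb ≤ b, ca.map Prod.fst = m ∧ cb.map Prod.fst = K ∧
      c = embedLinks ι₁ κ₁ ι₂ κ₂ r ca cb := by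
  obtain ⟨c₁, hc₁, c₂, hc₂, rfl⟩ := exists_le_add_of_le_add hc
  obtain ⟨ca, hca, rfl⟩ := le_map_iff.1 hc₁
  obtain ⟨d, hd, rfl⟩ := le_map_iff.1 hc₂
  have hsplit : (ca.map Prod.fst).map ι₁ + (d.map (Prod.map Prod.fst Prod.fst)).map κ₁ =
      m.map ι₁ + (K ×ˢ r.map Prod.fst).map κ₁ := by
    rw [← hpre]
    simp only [map_add, map_map]
    rfl
  obtain ⟨hca₁, hd₁⟩ := (map_add_map_inj hinj).1 hsplit
  obtain ⟨cb, hcb, hcb₁, rfl⟩ := exists_eq_product_of_le_product hb hr hr0 hd hd₁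
  exact ⟨ca, hca, cb, hcb, hca₁, hcb₁, rfl⟩

variable {ι₁ κ₁} in
theorem mem_product_of_mem_map_fst_embedLinks (hinj : Function.Injective (Sum.elim ι₁ κ₁))
    {r : Multiset (R₁ × R₂)} {a b : Multiset (X₁ × X₂)} {y : X₁ × R₁}
    (h : κ₁ y ∈ (embedLinks ι₁ κ₁ ι₂ κ₂ r a b).map Prod.fst) :
    y ∈ b.map Prod.fst ×ˢ r.map Prod.fst := by
  rw [map_fst_embedLinks] at h
  rcases mem_add.1 h with h | h
  · obtain ⟨x, -, hx⟩ := mem_map.1 h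
    exact absurd (@hinj (Sum.inl x) (Sum.inr y) hx) Sum.inl_ne_inr
  · obtain ⟨y', hy', hy⟩ := mem_map.1 h
    rwa [← hinj.comp Sum.inr_injective hy]

end Embedding

theorem IsSPSimulation.exists_step_embedLinks {Act : Type} {N₁ N₂ : PetriNet Act}
    {B : Set (Linking N₁ N₂)} (hB : IsSPSimulation N₁ N₂ B) {R₁ R₂ P₁ P₂ : Type*}
    {ι₁ : N₁.Plc → P₁} {κ₁ : N₁.Plc × R₁ → P₁} (ι₂ : N₂.Plc → P₂) (κ₂ : N₂.Plc × R₂ → P₂)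
    (hinj : Function.Injective (Sum.elim ι₁ κ₁)) {r : Multiset (R₁ × R₂)}
    {a b : Linking N₁ N₂} {c : Multiset (P₁ × P₂)} (hab : a + b ∈ B) (hb : b.proj1.Nodup)
    (hr : (r.map Prod.fst).Nodup) (hr0 : r ≠ 0) (hc : c ≤ embedLinks ι₁ κ₁ ι₂ κ₂ r a b)
    {t : N₁.Tr} {K : Multiset N₁.Plc} (hK : K ≠ 0) (hKt : K ≤ N₁.pre t)
    (hpre : c.map Prod.fst = embedPre ι₁ κ₁ (N₁.pre t) K (r.map Prod.fst)) :
    ∃ t₂ : N₂.Tr, ∃ K₂ ≤ b.proj2, N₂.lbl t₂ = N₁.lbl t ∧ K₂ ≠ 0 ∧ K₂ ≤ N₂.pre t₂ ∧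
      c.map Prod.snd = embedPre ι₂ κ₂ (N₂.pre t₂) K₂ (r.map Prod.snd) ∧
      ∃ cbar : Multiset (P₁ × P₂), cbar.map Prod.fst = (N₁.post t).map ι₁ ∧
        cbar.map Prod.snd = (N₂.post t₂).map ι₂ ∧ ∃ a', ∃ b' < b, a' + b' ∈ B ∧
          embedLinks ι₁ κ₁ ι₂ κ₂ r a b - c + cbar = embedLinks ι₁ κ₁ ι₂ κ₂ r a' b' := by
  obtain ⟨ca, hca, cb, hcb, hca₁, hcb₁, rfl⟩ :=
    exists_eq_embedLinks_of_le ι₂ κ₂ hinj hb hr hr0 hc hpre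
  have hpre₁ : (ca + cb).map Prod.fst = N₁.pre t := by
    rw [Multiset.map_add, hca₁, hcb₁, tsub_add_cancel_of_le hKt]
  obtain ⟨t₂, hlbl, hpre₂, cbar, hcbar₁, hcbar₂, hmem⟩ :=
    hB _ _ hab (add_le_add hca hcb) t hpre₁
  have hsnd : ca.map Prod.snd + cb.map Prod.snd = N₂.pre t₂ := by
    rw [← Multiset.map_add]
    exact hpre₂
  have hcb0 : cb ≠ 0 := by
    rintro rfl
    exact hK (by simpa using hcb₁.symm)
  have hsub : embedLinks ι₁ κ₁ ι₂ κ₂ r a b - embedLinks ι₁ κ₁ ι₂ κ₂ r ca cb =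
      embedLinks ι₁ κ₁ ι₂ κ₂ r (a - ca) (b - cb) := by
    refine tsub_eq_of_eq_add_rev ?_
    rw [← embedLinks_add, add_tsub_cancel_of_le hca, add_tsub_cancel_of_le hcb]
  refine ⟨t₂, cb.map Prod.snd, map_le_map hcb, hlbl, by simpa using hcb0,
    hsnd ▸ le_add_self, ?_, cbar.map (Prod.map ι₁ ι₂), ?_, ?_, a - ca + cbar, b - cb,
    (tsub_lt_iff_left hcb).2 (lt_add_of_pos_left b (pos_iff_ne_zero.2 hcb0)), ?_, ?_⟩
  · rw [map_snd_embedLinks, embedPre, ← eq_tsub_of_add_eq hsnd]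
  · rw [map_map, Prod.map_fst', ← map_map]
    exact congrArg _ hcbar₁
  · rw [map_map, Prod.map_snd', ← map_map]
    exact congrArg _ hcbar₂
  · rwa [add_right_comm, tsub_add_tsub_comm hca hcb]
  · rw [hsub]
    simp only [embedLinks, Multiset.map_add]
    abel

section Choice

variable {Act : Type}

section Places

variable (N₁ N₂ : PetriNet Act)

def choiceLeft : N₁.Plc → (choiceNet N₁ N₂).Plc := Sum.inl

def choiceRight : N₂.Plc → (choiceNet N₁ N₂).Plc := fun s => Sum.inr (Sum.inl s)

def choicePair : N₁.Plc × N₂.Plc → (choiceNet N₁ N₂).Plc := fun q => Sum.inr (Sum.inr q)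

theorem injective_sumElim_choiceLeft :
    Function.Injective (Sum.elim (choiceLeft N₁ N₂) (choicePair N₁ N₂)) :=
  Sum.inl_injective.sumElim (Sum.inr_injective.comp Sum.inr_injective) fun _ _ => Sum.inl_ne_inr

theorem injective_sumElim_choiceRight :
    Function.Injective (Sum.elim (choiceRight N₁ N₂) (choicePair N₁ N₂ ∘ Prod.swap)) :=
  (Sum.inr_injective.comp Sum.inl_injective).sumElim
    ((Sum.inr_injective.comp Sum.inr_injective).comp Prod.swap_injective)
    fun _ _ h => Sum.inl_ne_inr (Sum.inr_injective h)

theorem choiceNet_M0 : (choiceNet N₁ N₂).M0 = (N₁.M0 ×ˢ N₂.M0).map (choicePair N₁ N₂) := rfl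

variable {N₁ N₂}

theorem choiceNet_pre_inl {t : N₁.Tr} {K : Multiset N₁.Plc} (h) :
    (choiceNet N₁ N₂).pre ⟨Sum.inl (t, K), h⟩ =
      embedPre (choiceLeft N₁ N₂) (choicePair N₁ N₂) (N₁.pre t) K N₂.M0 := rfl

theorem choiceNet_pre_inr {t : N₂.Tr} {K : Multiset N₂.Plc} (h) :
    (choiceNet N₁ N₂).pre ⟨Sum.inr (t, K), h⟩ =
      embedPre (choiceRight N₁ N₂) (choicePair N₁ N₂ ∘ Prod.swap) (N₂.pre t) K N₁.M0 := by
  rw [embedPre, map_comp_swap_product]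
  rfl

end Places

variable {N₁l N₁r N₂l N₂r : PetriNet Act}

def leftLinks (lr : Linking N₁r N₂r) (a b : Linking N₁l N₂l) :
    Linking (choiceNet N₁l N₁r) (choiceNet N₂l N₂r) :=
  embedLinks (choiceLeft N₁l N₁r) (choicePair N₁l N₁r) (choiceLeft N₂l N₂r)
    (choicePair N₂l N₂r) lr a b

def rightLinks (ll : Linking N₁l N₂l) (a b : Linking N₁r N₂r) :
    Linking (choiceNet N₁l N₁r) (choiceNet N₂l N₂r) :=
  embedLinks (choiceRight N₁l N₁r) (choicePair N₁l N₁r ∘ Prod.swap) (choiceRight N₂l N₂r)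
    (choicePair N₂l N₂r ∘ Prod.swap) ll a b

theorem leftLinks_zero_eq_rightLinks_zero (ll : Linking N₁l N₂l) (lr : Linking N₁r N₂r) :
    leftLinks lr 0 ll = rightLinks ll 0 lr := by
  simp only [leftLinks, rightLinks, embedLinks, Multiset.map_zero, zero_add]
  rw [← map_swap_product lr ll, map_map]
  rfl

theorem leftLinks_swap (lr : Linking N₁r N₂r) (a b : Linking N₁l N₂l) :
    (leftLinks lr a b).swap = leftLinks lr.swap a.swap b.swap :=
  embedLinks_swap _ _ _ _ _ _ _

theorem rightLinks_swap (ll : Linking N₁l N₂l) (a b : Linking N₁r N₂r) :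
    (rightLinks ll a b).swap = rightLinks ll.swap a.swap b.swap :=
  embedLinks_swap _ _ _ _ _ _ _

/-- `b` is the part of `ll` still sitting on fresh places; `b < ll` records that the left component
has moved, which disables the right one. -/
def choiceBisim (Bl : Set (Linking N₁l N₂l)) (Br : Set (Linking N₁r N₂r)) (ll : Linking N₁l N₂l)
    (lr : Linking N₁r N₂r) : Set (Linking (choiceNet N₁l N₁r) (choiceNet N₂l N₂r)) :=
  {L | L = leftLinks lr 0 ll ∨ (∃ a b, a + b ∈ Bl ∧ b < ll ∧ L = leftLinks lr a b) ∨
    ∃ a b, a + b ∈ Br ∧ b < lr ∧ L = rightLinks ll a b}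

variable {Bl : Set (Linking N₁l N₂l)} {Br : Set (Linking N₁r N₂r)} {ll : Linking N₁l N₂l}
  {lr : Linking N₁r N₂r} {c : Linking (choiceNet N₁l N₁r) (choiceNet N₂l N₂r)}

theorem isInitial_leftLinks (hll : ll.IsInitial) (hlr : lr.IsInitial) :
    (leftLinks lr 0 ll).IsInitial := by
  simp only [Linking.IsInitial, Linking.proj1, Linking.proj2] at hll hlr ⊢
  simp [leftLinks, map_fst_embedLinks, map_snd_embedLinks, hll, hlr, choiceNet_M0]

theorem isSPMatched_leftLinks (hBl : IsSPSimulation N₁l N₂l Bl) (hm₁l : N₁l.M0.Nodup)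
    (hm₁r : N₁r.M0.Nodup) (hn₁r : N₁r.M0 ≠ 0) (hll : ll.IsInitial) (hlr : lr.IsInitial)
    {a b : Linking N₁l N₂l} (hab : a + b ∈ Bl) (hb : b ≤ ll) (hc : c ≤ leftLinks lr a b)
    {t : N₁l.Tr} {K : Multiset N₁l.Plc} (ht : choiceTrProp N₁l N₁r (Sum.inl (t, K)))
    (hpre : c.proj1 = (choiceNet N₁l N₁r).pre ⟨Sum.inl (t, K), ht⟩) :
    IsSPMatched (choiceBisim Bl Br ll lr) c (leftLinks lr a b) ⟨Sum.inl (t, K), ht⟩ := by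
  have hll₁ : ll.map Prod.fst = N₁l.M0 := hll.1
  have hlr₁ : lr.map Prod.fst = N₁r.M0 := hlr.1
  have hlr0 : lr ≠ 0 := by
    rintro rfl
    exact hn₁r (hlr.1.symm.trans (map_zero _))
  obtain ⟨t₂, K₂, hK₂b, hlbl, hK₂, hK₂t, hpre₂, cbar, hcbar₁, hcbar₂, a', b', hb', hab', heq⟩ :=
    hBl.exists_step_embedLinks (choiceLeft N₂l N₂r) (choicePair N₂l N₂r)
      (injective_sumElim_choiceLeft N₁l N₁r) hab (nodup_of_le (map_le_map hb) (hll₁ ▸ hm₁l))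
      (hlr₁ ▸ hm₁r) hlr0 hc ht.1 ht.2.1
      (by rw [hlr₁]; exact hpre.trans (choiceNet_pre_inl ht))
  refine ⟨⟨Sum.inl (t₂, K₂), hK₂, hK₂t, hK₂b.trans (hll.2 ▸ map_le_map hb)⟩, hlbl, ?_,
    cbar, hcbar₁, hcbar₂,
    Or.inr (Or.inl ⟨a', b', hab', hb'.trans_le hb, heq⟩)⟩
  rwa [show lr.map Prod.snd = N₂r.M0 from hlr.2] at hpre₂

theorem isSPMatched_rightLinks (hBr : IsSPSimulation N₁r N₂r Br) (hm₁l : N₁l.M0.Nodup)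
    (hm₁r : N₁r.M0.Nodup) (hn₁l : N₁l.M0 ≠ 0) (hll : ll.IsInitial) (hlr : lr.IsInitial)
    {a b : Linking N₁r N₂r} (hab : a + b ∈ Br) (hb : b ≤ lr) (hc : c ≤ rightLinks ll a b)
    {t : N₁r.Tr} {K : Multiset N₁r.Plc} (ht : choiceTrProp N₁l N₁r (Sum.inr (t, K)))
    (hpre : c.proj1 = (choiceNet N₁l N₁r).pre ⟨Sum.inr (t, K), ht⟩) :
    IsSPMatched (choiceBisim Bl Br ll lr) c (rightLinks ll a b) ⟨Sum.inr (t, K), ht⟩ := by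
  have hll₁ : ll.map Prod.fst = N₁l.M0 := hll.1
  have hlr₁ : lr.map Prod.fst = N₁r.M0 := hlr.1
  have hll0 : ll ≠ 0 := by
    rintro rfl
    exact hn₁l (hll.1.symm.trans (map_zero _))
  obtain ⟨t₂, K₂, hK₂b, hlbl, hK₂, hK₂t, hpre₂, cbar, hcbar₁, hcbar₂, a', b', hb', hab', heq⟩ :=
    hBr.exists_step_embedLinks (choiceRight N₂l N₂r) (choicePair N₂l N₂r ∘ Prod.swap)
      (injective_sumElim_choiceRight N₁l N₁r) hab (nodup_of_le (map_le_map hb) (hlr₁ ▸ hm₁r))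
      (hll₁ ▸ hm₁l) hll0 hc ht.1 ht.2.1
      (by rw [hll₁]; exact hpre.trans (choiceNet_pre_inr ht))
  refine ⟨⟨Sum.inr (t₂, K₂), hK₂, hK₂t, hK₂b.trans (hlr.2 ▸ map_le_map hb)⟩, hlbl, ?_,
    cbar, hcbar₁, hcbar₂,
    Or.inr (Or.inr ⟨a', b', hab', hb'.trans_le hb, heq⟩)⟩
  rw [show ll.map Prod.snd = N₂l.M0 from hll.2] at hpre₂
  exact hpre₂.trans (choiceNet_pre_inr _).symm

theorem proj1_ne_pre_inr_of_le_leftLinks (hm₁l : N₁l.M0.Nodup) (hll₁ : ll.proj1 = N₁l.M0)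
    {a b : Linking N₁l N₂l} (hb : b < ll) (hc : c ≤ leftLinks lr a b) {t : N₁r.Tr}
    {K : Multiset N₁r.Plc} (ht : choiceTrProp N₁l N₁r (Sum.inr (t, K))) :
    c.proj1 ≠ (choiceNet N₁l N₁r).pre ⟨Sum.inr (t, K), ht⟩ := by
  intro hpre
  refine hb.ne (eq_of_le_of_map_subset hb.le (hll₁ ▸ hm₁l) fun x hx => ?_)
  obtain ⟨k, hk⟩ := exists_mem_of_ne_zero ht.1
  have hxk : choicePair N₁l N₁r (x, k) ∈ c.map Prod.fst := by
    rw [show c.map Prod.fst = _ from hpre, choiceNet_pre_inr, embedPre, ← hll₁]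
    exact mem_add.2 (Or.inr (mem_map.2 ⟨(k, x), mem_product.2 ⟨hk, hx⟩, rfl⟩))
  exact (mem_product.1 (mem_product_of_mem_map_fst_embedLinks _ _
    (injective_sumElim_choiceLeft N₁l N₁r) (mem_of_le (map_le_map hc) hxk))).1

theorem proj1_ne_pre_inl_of_le_rightLinks (hm₁r : N₁r.M0.Nodup) (hlr₁ : lr.proj1 = N₁r.M0)
    {a b : Linking N₁r N₂r} (hb : b < lr) (hc : c ≤ rightLinks ll a b) {t : N₁l.Tr}
    {K : Multiset N₁l.Plc} (ht : choiceTrProp N₁l N₁r (Sum.inl (t, K))) :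
    c.proj1 ≠ (choiceNet N₁l N₁r).pre ⟨Sum.inl (t, K), ht⟩ := by
  intro hpre
  refine hb.ne (eq_of_le_of_map_subset hb.le (hlr₁ ▸ hm₁r) fun x hx => ?_)
  obtain ⟨k, hk⟩ := exists_mem_of_ne_zero ht.1
  have hxk : (choicePair N₁l N₁r ∘ Prod.swap) (x, k) ∈ c.map Prod.fst := by
    rw [show c.map Prod.fst = _ from hpre, choiceNet_pre_inl, embedPre, ← hlr₁]
    exact mem_add.2 (Or.inr (mem_map.2 ⟨(k, x), mem_product.2 ⟨hk, hx⟩, rfl⟩))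
  exact (mem_product.1 (mem_product_of_mem_map_fst_embedLinks _ _
    (injective_sumElim_choiceRight N₁l N₁r) (mem_of_le (map_le_map hc) hxk))).1

theorem isSPSimulation_choiceBisim (hm₁l : N₁l.M0.Nodup) (hm₁r : N₁r.M0.Nodup)
    (hn₁l : N₁l.M0 ≠ 0) (hn₁r : N₁r.M0 ≠ 0) (hBl : IsSPSimulation N₁l N₂l Bl)
    (hBr : IsSPSimulation N₁r N₂r Br) (hll : ll ∈ Bl) (hlr : lr ∈ Br) (hll₀ : ll.IsInitial)
    (hlr₀ : lr.IsInitial) :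
    IsSPSimulation (choiceNet N₁l N₁r) (choiceNet N₂l N₂r) (choiceBisim Bl Br ll lr) := by
  have hll' : 0 + ll ∈ Bl := by rwa [zero_add]
  have hlr' : 0 + lr ∈ Br := by rwa [zero_add]
  rintro c L (rfl | ⟨a, b, hab, hb, rfl⟩ | ⟨a, b, hab, hb, rfl⟩) hc ⟨⟨t, K⟩ | ⟨t, K⟩, ht⟩ hpre
  · exact isSPMatched_leftLinks hBl hm₁l hm₁r hn₁r hll₀ hlr₀ hll' le_rfl hc ht hpre
  · rw [leftLinks_zero_eq_rightLinks_zero] at hc ⊢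
    exact isSPMatched_rightLinks hBr hm₁l hm₁r hn₁l hll₀ hlr₀ hlr' le_rfl hc ht hpre
  · exact isSPMatched_leftLinks hBl hm₁l hm₁r hn₁r hll₀ hlr₀ hab hb.le hc ht hpre
  · exact absurd hpre (proj1_ne_pre_inr_of_le_leftLinks hm₁l hll₀.1 hb hc ht)
  · exact absurd hpre (proj1_ne_pre_inl_of_le_rightLinks hm₁r hlr₀.1 hb hc ht)
  · exact isSPMatched_rightLinks hBr hm₁l hm₁r hn₁l hll₀ hlr₀ hab hb.le hc ht hpre

theorem swap_mem_choiceBisim {L : Linking (choiceNet N₁l N₁r) (choiceNet N₂l N₂r)}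
    (h : L ∈ choiceBisim Bl Br ll lr) :
    L.swap ∈ choiceBisim (Linking.swap ⁻¹' Bl) (Linking.swap ⁻¹' Br) ll.swap lr.swap := by
  rcases h with rfl | ⟨a, b, hab, hb, rfl⟩ | ⟨a, b, hab, hb, rfl⟩
  · exact Or.inl (by rw [leftLinks_swap, Linking.swap_zero])
  · exact Or.inr (Or.inl ⟨a.swap, b.swap, by simpa, Linking.swap_lt_swap.2 hb,
      leftLinks_swap _ _ _⟩)
  · exact Or.inr (Or.inr ⟨a.swap, b.swap, by simpa, Linking.swap_lt_swap.2 hb,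
      rightLinks_swap _ _ _⟩)

theorem preimage_swap_choiceBisim :
    Linking.swap ⁻¹' choiceBisim Bl Br ll lr =
      choiceBisim (Linking.swap ⁻¹' Bl) (Linking.swap ⁻¹' Br) ll.swap lr.swap := by
  ext L
  refine ⟨fun h => by simpa using swap_mem_choiceBisim h, fun h => ?_⟩
  simpa [Set.preimage_preimage] using swap_mem_choiceBisim h

end Choice

theorem spBisimilar_congr_choice_general {Act : Type} (N₁l N₁r N₂l N₂r : PetriNet Act)
    (hm₁l : N₁l.M0.Nodup) (hm₁r : N₁r.M0.Nodup)
    (hm₂l : N₂l.M0.Nodup) (hm₂r : N₂r.M0.Nodup)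
    (hn₁l : N₁l.M0 ≠ 0) (hn₁r : N₁r.M0 ≠ 0)
    (hn₂l : N₂l.M0 ≠ 0) (hn₂r : N₂r.M0 ≠ 0)
    (hl : SPBisimilar N₁l N₂l) (hr : SPBisimilar N₁r N₂r) :
    SPBisimilar (choiceNet N₁l N₁r) (choiceNet N₂l N₂r) := by
  obtain ⟨htypl, Bl, hBl, ll, hll, hll₀⟩ := hl
  obtain ⟨htypr, Br, hBr, lr, hlr, hlr₀⟩ := hr
  rw [isSPBisim_iff] at hBl hBr
  refine ⟨congrArg₂ (· ∪ ·) htypl htypr, choiceBisim Bl Br ll lr, isSPBisim_iff.2 ⟨?_, ?_⟩,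
    leftLinks lr 0 ll, Or.inl rfl, isInitial_leftLinks hll₀ hlr₀⟩
  · exact isSPSimulation_choiceBisim hm₁l hm₁r hn₁l hn₁r hBl.1 hBr.1 hll hlr hll₀ hlr₀
  · rw [preimage_swap_choiceBisim]
    exact isSPSimulation_choiceBisim hm₂l hm₂r hn₂l hn₂r hBl.2 hBr.2 (by simpa) (by simpa)
      (Linking.isInitial_swap.2 hll₀) (Linking.isInitial_swap.2 hlr₀)

/-- Structure preserving bisimilarity is a congruence for the CCSP choice operator on
nets whose initial markings are nonempty plain sets. -/
theorem spBisimilar_congr_choice {Act : Type} (N₁l N₁r N₂l N₂r : PetriNet Act)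
    (h₁l : N₁l.BoundedParallelism) (h₁r : N₁r.BoundedParallelism)
    (h₂l : N₂l.BoundedParallelism) (h₂r : N₂r.BoundedParallelism)
    (hm₁l : N₁l.M0.Nodup) (hm₁r : N₁r.M0.Nodup)
    (hm₂l : N₂l.M0.Nodup) (hm₂r : N₂r.M0.Nodup)
    (hn₁l : N₁l.M0 ≠ 0) (hn₁r : N₁r.M0 ≠ 0)
    (hn₂l : N₂l.M0 ≠ 0) (hn₂r : N₂r.M0 ≠ 0)
    (hl : SPBisimilar N₁l N₂l) (hr : SPBisimilar N₁r N₂r) :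
    SPBisimilar (choiceNet N₁l N₁r) (choiceNet N₂l N₂r) :=
  spBisimilar_congr_choice_general N₁l N₁r N₂l N₂r hm₁l hm₁r hm₂l hm₂r hn₁l hn₁r hn₂l hn₂r hl hr
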